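/- arXiv:math/0610636 — 2 statements merged into one kernel-verified Lean document; each statement's English description precedes it below -/
import Mathlib

section
/- For m ∈ (0,1), nonnegative integers x1, x2 with r = sqrt(x1^2 + x2^2) > 0, the generating function of visits V_m(x1,x2) = Σ_{n≥0} m^n P(S_n = (x1,x2)) of the simple random walk admits the Bessel integral representation V_m(x1,x2) = r ∫_0^∞ e^{−r u} I_{x1}((m r/2) u) I_{x2}((m r/2) u) du, where I_n is the modified Bessel function of the first kind I_n(z) = Σ_{k≥0} (1/(k!(n+k)!)) (z/2)^{n+2k}. -/
/-!
Split a walk into its horizontal and vertical steps: a walk of length `N` from the origin to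
`(p, q)` with `k` left, `p + k` right, `l` down and `q + l` up steps is counted by the multinomial
`N! / (k! (p+k)! l! (q+l)!)`, so only `N = p + q + 2t` with `t = k + l` occur, and the sum of these
multinomials over `k + l = t` is `N!` times the coefficient of `(z/2)^N` in `I_p(z) I_q(z)`.
Integrating that Cauchy product termwise against `e^{-ru}`, with `∫₀^∞ uᴺ e^{-ru} du = N!/r^{N+1}`,
turns `(m r u / 4)^N` into `(m/4)^N N! / r`, which is `m^N P(S_N = (p, q)) / r`. The termwise
integration is legitimate because all terms are nonnegative and their integrals sum to at most
`∑ mⁿ / r < ∞`.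
-/

/-- `srwProb n x` is the probability that the simple symmetric random walk on ℤ²,
started at the origin, is at `x` at time `n`. -/
noncomputable def srwProb : ℕ → ℤ × ℤ → ℝ
  | 0, x => if x = 0 then 1 else 0
  | n + 1, x =>
      (srwProb n (x + (1, 0)) + srwProb n (x - (1, 0)) +
        srwProb n (x + (0, 1)) + srwProb n (x - (0, 1))) / 4

/-- Modified Bessel function of the first kind of integer order:
`I_n(z) = ∑ₖ (1/(k!(n+k)!)) (z/2)^{n+2k}`. -/
noncomputable def besselI (n : ℕ) (z : ℝ) : ℝ :=
  ∑' k : ℕ, (1 / ((Nat.factorial k : ℝ) * (Nat.factorial (n + k)))) * (z / 2) ^ (n + 2 * k)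

open Finset MeasureTheory
open scoped Nat

def lineWalks : ℕ → ℤ → ℕ
  | 0, x => if x = 0 then 1 else 0
  | n + 1, x => lineWalks n (x + 1) + lineWalks n (x - 1)

lemma lineWalks_ne_zero {n : ℕ} {x : ℤ} (h : lineWalks n x ≠ 0) :
    ∃ R ≤ n, x = 2 * R - n := by
  induction n generalizing x with
  | zero => exact ⟨0, le_rfl, by simpa [lineWalks] using h⟩
  | succ n ih =>
    rw [lineWalks] at h
    by_cases h1 : lineWalks n (x + 1) = 0
    · obtain ⟨R, hR, hx⟩ := ih (show lineWalks n (x - 1) ≠ 0 by omega)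
      exact ⟨R + 1, by omega, by push_cast; omega⟩
    · obtain ⟨R, hR, hx⟩ := ih h1
      exact ⟨R, by omega, by push_cast; omega⟩

/-- A walk with `R` right steps out of `n` ends at `2R - n`. -/
lemma lineWalks_two_mul_sub (n R : ℕ) : lineWalks n (2 * R - n) = n.choose R := by
  induction n generalizing R with
  | zero => cases R <;> simp [lineWalks]; omega
  | succ n ih =>
    rw [lineWalks]
    cases R with
    | zero =>
      have hfar : lineWalks n (-n - 2) = 0 := by
        by_contra h
        obtain ⟨R, -, hR⟩ := lineWalks_ne_zero h
        omega
      rw [show 2 * ((0 : ℕ) : ℤ) - (n + 1 : ℕ) + 1 = 2 * (0 : ℕ) - n by push_cast; ring,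
        show 2 * ((0 : ℕ) : ℤ) - (n + 1 : ℕ) - 1 = -n - 2 by push_cast; ring, ih, hfar]
      simp
    | succ R =>
      rw [show 2 * ((R + 1 : ℕ) : ℤ) - (n + 1 : ℕ) + 1 = 2 * (R + 1 : ℕ) - n by push_cast; ring,
        show 2 * ((R + 1 : ℕ) : ℤ) - (n + 1 : ℕ) - 1 = 2 * R - n by push_cast; ring,
        ih, ih, Nat.choose_succ_succ', add_comm]

lemma lineWalks_add_two_mul (p k : ℕ) : lineWalks (p + 2 * k) p = (p + 2 * k).choose k := by
  rw [show (p : ℤ) = 2 * (p + k : ℕ) - (p + 2 * k : ℕ) by push_cast; ring, lineWalks_two_mul_sub,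
    ← Nat.choose_symm (by omega), show p + 2 * k - (p + k) = k by omega]

lemma exists_eq_add_two_mul_of_lineWalks_ne_zero {i p : ℕ} (h : lineWalks i p ≠ 0) :
    ∃ k, i = p + 2 * k := by
  obtain ⟨R, hR, hp⟩ := lineWalks_ne_zero h
  exact ⟨i - R, by omega⟩

def planeWalks : ℕ → ℤ × ℤ → ℕ
  | 0, x => if x = 0 then 1 else 0
  | n + 1, x =>
      planeWalks n (x + (1, 0)) + planeWalks n (x - (1, 0)) +
        planeWalks n (x + (0, 1)) + planeWalks n (x - (0, 1))

lemma planeWalks_eq_sum_antidiagonal (n : ℕ) (a b : ℤ) :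
    planeWalks n (a, b) =
      ∑ ij ∈ antidiagonal n, n.choose ij.1 * (lineWalks ij.1 a * lineWalks ij.2 b) := by
  induction n generalizing a b with
  | zero => by_cases ha : a = 0 <;> simp [planeWalks, lineWalks, ha, Prod.ext_iff]
  | succ n ih =>
    have hsplit :=
      sum_antidiagonal_choose_succ_mul (fun i j => lineWalks i a * lineWalks j b) n
    simp only [Nat.cast_id] at hsplit
    rw [hsplit, planeWalks]
    simp only [Prod.mk_add_mk, Prod.mk_sub_mk, add_zero, sub_zero, ih, lineWalks,
      ← sum_add_distrib]
    refine sum_congr rfl fun ij hij => ?_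
    rw [Nat.choose_symm_of_eq_add (mem_antidiagonal.mp hij).symm]
    ring

noncomputable def besselProdCoeff (p q t : ℕ) : ℝ :=
  ∑ kl ∈ antidiagonal t,
    1 / ((kl.1 ! : ℝ) * (p + kl.1)!) * (1 / ((kl.2 ! : ℝ) * (q + kl.2)!))

lemma cast_choose_mul_choose_mul_choose (p q k l : ℕ) :
    ((p + 2 * k + (q + 2 * l)).choose (p + 2 * k) *
        ((p + 2 * k).choose k * (q + 2 * l).choose l) : ℝ) =
      (p + 2 * k + (q + 2 * l))! * (1 / ((k ! : ℝ) * (p + k)!) * (1 / ((l ! : ℝ) * (q + l)!))) := by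
  rw [Nat.cast_add_choose, Nat.cast_choose ℝ (by omega : k ≤ p + 2 * k),
    Nat.cast_choose ℝ (by omega : l ≤ q + 2 * l), show p + 2 * k - k = p + k by omega,
    show q + 2 * l - l = q + l by omega]
  field_simp

lemma planeWalks_add_add_two_mul (p q t : ℕ) :
    (planeWalks (p + q + 2 * t) (p, q) : ℝ) = (p + q + 2 * t)! * besselProdCoeff p q t := by
  rw [planeWalks_eq_sum_antidiagonal, besselProdCoeff, mul_sum]
  push_cast
  symm
  refine sum_bij_ne_zero (fun kl _ _ => (p + 2 * kl.1, q + 2 * kl.2)) ?_ ?_ ?_ ?_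
  · intro kl hkl _
    exact mem_antidiagonal.mpr (by have := mem_antidiagonal.mp hkl; omega)
  · intro kl _ _ kl' _ _ h
    simp only [Prod.mk.injEq] at h
    ext <;> omega
  · intro ij hij hne
    simp only [ne_eq, mul_eq_zero, not_or, Nat.cast_eq_zero] at hne
    obtain ⟨k, hk⟩ := exists_eq_add_two_mul_of_lineWalks_ne_zero hne.2.1
    obtain ⟨l, hl⟩ := exists_eq_add_two_mul_of_lineWalks_ne_zero hne.2.2
    have hij := mem_antidiagonal.mp hij
    exact ⟨(k, l), mem_antidiagonal.mpr (by omega), by positivity, by ext <;> simp <;> omega⟩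
  · intro kl hkl _
    rw [← mem_antidiagonal.mp hkl, lineWalks_add_two_mul, lineWalks_add_two_mul,
      show p + q + 2 * (kl.1 + kl.2) = p + 2 * kl.1 + (q + 2 * kl.2) by ring]
    exact (cast_choose_mul_choose_mul_choose p q kl.1 kl.2).symm

lemma exists_eq_add_add_two_mul_of_planeWalks_ne_zero {n p q : ℕ}
    (h : planeWalks n (p, q) ≠ 0) : ∃ t, n = p + q + 2 * t := by
  rw [planeWalks_eq_sum_antidiagonal] at h
  obtain ⟨ij, hij, hne⟩ := exists_ne_zero_of_sum_ne_zero h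
  simp only [ne_eq, mul_eq_zero, not_or] at hne
  obtain ⟨k, hk⟩ := exists_eq_add_two_mul_of_lineWalks_ne_zero hne.2.1
  obtain ⟨l, hl⟩ := exists_eq_add_two_mul_of_lineWalks_ne_zero hne.2.2
  exact ⟨k + l, by rw [← mem_antidiagonal.mp hij]; omega⟩

lemma srwProb_eq_planeWalks_div (n : ℕ) (x : ℤ × ℤ) : srwProb n x = planeWalks n x / 4 ^ n := by
  induction n generalizing x with
  | zero => by_cases hx : x = 0 <;> simp [srwProb, planeWalks, hx]
  | succ n ih =>
    rw [srwProb, planeWalks, ih, ih, ih, ih, pow_succ]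
    push_cast
    ring

lemma srwProb_mem_Icc (n : ℕ) (x : ℤ × ℤ) : srwProb n x ∈ Set.Icc 0 1 := by
  induction n generalizing x with
  | zero => by_cases hx : x = 0 <;> simp [srwProb, hx]
  | succ n ih =>
    have h1 := ih (x + (1, 0)); have h2 := ih (x - (1, 0))
    have h3 := ih (x + (0, 1)); have h4 := ih (x - (0, 1))
    simp only [Set.mem_Icc] at h1 h2 h3 h4 ⊢
    rw [srwProb]
    constructor <;> linarith

lemma pow_mul_srwProb_add_add_two_mul (m : ℝ) (p q t : ℕ) :
    m ^ (p + q + 2 * t) * srwProb (p + q + 2 * t) (p, q) =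
      (m / 4) ^ (p + q + 2 * t) * ((p + q + 2 * t)! * besselProdCoeff p q t) := by
  rw [srwProb_eq_planeWalks_div, planeWalks_add_add_two_mul, div_pow]
  field_simp

lemma tsum_pow_mul_srwProb (m : ℝ) (p q : ℕ) :
    ∑' n : ℕ, m ^ n * srwProb n (p, q) =
      ∑' t : ℕ, (m / 4) ^ (p + q + 2 * t) * ((p + q + 2 * t)! * besselProdCoeff p q t) := by
  have hinj : Function.Injective fun t : ℕ => p + q + 2 * t := fun a b h => by simp at h; omega
  have hsupp : Function.support (fun n : ℕ => m ^ n * srwProb n (p, q)) ⊆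
      Set.range fun t : ℕ => p + q + 2 * t := by
    intro n hn
    have hwalk : planeWalks n (p, q) ≠ 0 := fun h => hn (by simp [srwProb_eq_planeWalks_div, h])
    obtain ⟨t, ht⟩ := exists_eq_add_add_two_mul_of_planeWalks_ne_zero hwalk
    exact ⟨t, ht.symm⟩
  rw [← hinj.tsum_eq hsupp]
  exact tsum_congr (pow_mul_srwProb_add_add_two_mul m p q)

lemma summable_pow_mul_besselProdCoeff {m : ℝ} (hm0 : 0 ≤ m) (hm1 : m < 1) (p q : ℕ) :
    Summable fun t : ℕ =>
      (m / 4) ^ (p + q + 2 * t) * ((p + q + 2 * t)! * besselProdCoeff p q t) := by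
  have hinj : Function.Injective fun t : ℕ => p + q + 2 * t := fun a b h => by simp at h; omega
  have hvisits : Summable fun n : ℕ => m ^ n * srwProb n (p, q) :=
    (summable_geometric_of_lt_one hm0 hm1).of_nonneg_of_le
      (fun n => mul_nonneg (pow_nonneg hm0 n) (srwProb_mem_Icc n _).1)
      (fun n => mul_le_of_le_one_right (pow_nonneg hm0 n) (srwProb_mem_Icc n _).2)
  exact (hvisits.comp_injective hinj).congr (pow_mul_srwProb_add_add_two_mul m p q)

lemma summable_norm_besselI_term (p : ℕ) (w : ℝ) :
    Summable fun k : ℕ => ‖1 / ((k ! : ℝ) * (p + k)!) * w ^ (p + 2 * k)‖ := by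
  refine ((Real.summable_pow_div_factorial (|w| ^ 2)).mul_left (|w| ^ p)).of_nonneg_of_le
    (fun k => norm_nonneg _) fun k => ?_
  have hfac : (1 : ℝ) ≤ (p + k)! := by exact_mod_cast (p + k).factorial_pos
  rw [norm_mul, norm_pow, Real.norm_eq_abs, Real.norm_eq_abs, abs_of_nonneg (by positivity),
    pow_add, pow_mul]
  calc 1 / ((k ! : ℝ) * (p + k)!) * (|w| ^ p * (|w| ^ 2) ^ k)
      ≤ 1 / (k ! : ℝ) * (|w| ^ p * (|w| ^ 2) ^ k) := by
        gcongr
        exact le_mul_of_one_le_right (by positivity) hfac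
    _ = |w| ^ p * ((|w| ^ 2) ^ k / k !) := by ring

lemma besselI_mul_besselI (p q : ℕ) (z : ℝ) :
    besselI p z * besselI q z = ∑' t : ℕ, besselProdCoeff p q t * (z / 2) ^ (p + q + 2 * t) := by
  rw [besselI, besselI, tsum_mul_tsum_eq_tsum_sum_antidiagonal_of_summable_norm
    (summable_norm_besselI_term p _) (summable_norm_besselI_term q _)]
  refine tsum_congr fun t => ?_
  rw [besselProdCoeff, sum_mul]
  refine sum_congr rfl fun kl hkl => ?_
  rw [← mem_antidiagonal.mp hkl,
    show p + q + 2 * (kl.1 + kl.2) = p + 2 * kl.1 + (q + 2 * kl.2) by ring, pow_add]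
  ring

lemma integrableOn_pow_mul_exp_neg_mul_Ioi (N : ℕ) {r : ℝ} (hr : 0 < r) :
    IntegrableOn (fun u : ℝ => u ^ N * Real.exp (-(r * u))) (Set.Ioi 0) := by
  refine (integrableOn_rpow_mul_exp_neg_mul_rpow (s := N) (by linarith [N.cast_nonneg (α := ℝ)])
    one_pos hr).congr_fun (fun u _ => ?_) measurableSet_Ioi
  simp only [Real.rpow_natCast, Real.rpow_one, neg_mul]

lemma integral_pow_mul_exp_neg_mul_Ioi (N : ℕ) {r : ℝ} (hr : 0 < r) :
    ∫ u in Set.Ioi (0 : ℝ), u ^ N * Real.exp (-(r * u)) = N ! / r ^ (N + 1) := by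
  have h := Real.integral_rpow_mul_exp_neg_mul_Ioi (a := N + 1) (by positivity) hr
  rw [add_sub_cancel_right, Real.Gamma_nat_eq_factorial] at h
  simp only [Real.rpow_natCast] at h
  rw [h, show (N : ℝ) + 1 = (N + 1 : ℕ) by push_cast; rfl, Real.rpow_natCast, one_div, inv_pow,
    inv_mul_eq_div]

lemma integral_exp_neg_mul_mul_tsum_pow {ι : Type*} [Countable ι] {r : ℝ} (hr : 0 < r)
    (a : ι → ℝ) (e : ι → ℕ) (ha : Summable fun i => |a i| * ((e i)! / r ^ (e i + 1))) :
    ∫ u in Set.Ioi (0 : ℝ), Real.exp (-(r * u)) * ∑' i, a i * u ^ e i =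
      ∑' i, a i * ((e i)! / r ^ (e i + 1)) := by
  have hint : ∀ i, IntegrableOn (fun u => a i * (u ^ e i * Real.exp (-(r * u)))) (Set.Ioi 0) :=
    fun i => (integrableOn_pow_mul_exp_neg_mul_Ioi (e i) hr).const_mul (a i)
  have hnorm : ∀ i, ∫ u in Set.Ioi (0 : ℝ), ‖a i * (u ^ e i * Real.exp (-(r * u)))‖ =
      |a i| * ((e i)! / r ^ (e i + 1)) := by
    intro i
    rw [← integral_pow_mul_exp_neg_mul_Ioi (e i) hr, ← integral_const_mul]
    refine setIntegral_congr_fun measurableSet_Ioi fun u hu => ?_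
    rw [norm_mul, norm_mul, norm_pow, Real.norm_eq_abs, Real.norm_eq_abs,
      abs_of_pos (show 0 < u from hu), Real.norm_of_nonneg (Real.exp_pos _).le]
  calc ∫ u in Set.Ioi (0 : ℝ), Real.exp (-(r * u)) * ∑' i, a i * u ^ e i
      = ∫ u in Set.Ioi (0 : ℝ), ∑' i, a i * (u ^ e i * Real.exp (-(r * u))) := by
        congr 1 with u
        rw [← tsum_mul_left]
        exact tsum_congr fun i => by ring
    _ = ∑' i, ∫ u in Set.Ioi (0 : ℝ), a i * (u ^ e i * Real.exp (-(r * u))) :=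
        (integral_tsum_of_summable_integral_norm hint (by simpa only [hnorm] using ha)).symm
    _ = ∑' i, a i * ((e i)! / r ^ (e i + 1)) := by
        simp only [integral_const_mul, integral_pow_mul_exp_neg_mul_Ioi _ hr]

theorem srw_visits_bessel_general (m : ℝ) (hm : m ∈ Set.Ioo (0 : ℝ) 1) (x1 x2 : ℕ)
    (r : ℝ) (hrpos : 0 < r) :
    ∑' n : ℕ, m ^ n * srwProb n ((x1 : ℤ), (x2 : ℤ)) =
      r * ∫ u in Set.Ioi (0 : ℝ),
        Real.exp (-r * u) * besselI x1 (m * r / 2 * u) * besselI x2 (m * r / 2 * u) := by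
  obtain ⟨hm0, hm1⟩ := hm
  set a : ℕ → ℝ := fun t => besselProdCoeff x1 x2 t * (m * r / 4) ^ (x1 + x2 + 2 * t)
  have hterm : ∀ t, r * (a t * ((x1 + x2 + 2 * t)! / r ^ (x1 + x2 + 2 * t + 1))) =
      (m / 4) ^ (x1 + x2 + 2 * t) * ((x1 + x2 + 2 * t)! * besselProdCoeff x1 x2 t) := fun t => by
    simp only [a]
    field_simp
    ring
  have hsummable :
      Summable fun t => |a t| * ((x1 + x2 + 2 * t)! / r ^ (x1 + x2 + 2 * t + 1)) := by
    refine ((summable_pow_mul_besselProdCoeff hm0.le hm1 x1 x2).div_const r).congr fun t => ?_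
    have ha : 0 ≤ a t := mul_nonneg (sum_nonneg fun _ _ => by positivity) (by positivity)
    rw [abs_of_nonneg ha, div_eq_iff hrpos.ne', ← hterm]
    ring
  have hintegrand : ∀ u : ℝ, Real.exp (-r * u) * besselI x1 (m * r / 2 * u) *
      besselI x2 (m * r / 2 * u) = Real.exp (-(r * u)) * ∑' t, a t * u ^ (x1 + x2 + 2 * t) :=
    fun u => by
      rw [mul_assoc, besselI_mul_besselI, neg_mul]
      congr 2 with t
      simp only [a]
      ring
  rw [tsum_pow_mul_srwProb, funext hintegrand,
    integral_exp_neg_mul_mul_tsum_pow hrpos a _ hsummable, ← tsum_mul_left]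
  exact tsum_congr fun t => (hterm t).symm

/-- Bessel integral representation of the generating function of visits:
`V_m(x₁,x₂) = r ∫₀^∞ e^{-ru} I_{x₁}((mr/2)u) I_{x₂}((mr/2)u) du`, `r = √(x₁²+x₂²)`. -/
theorem srw_visits_bessel (m : ℝ) (hm : m ∈ Set.Ioo (0 : ℝ) 1) (x1 x2 : ℕ)
    (r : ℝ) (hr : r = Real.sqrt ((x1 : ℝ) ^ 2 + (x2 : ℝ) ^ 2)) (hrpos : 0 < r) :
    ∑' n : ℕ, m ^ n * srwProb n ((x1 : ℤ), (x2 : ℤ)) =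
      r * ∫ u in Set.Ioi (0 : ℝ),
        Real.exp (-r * u) * besselI x1 (m * r / 2 * u) * besselI x2 (m * r / 2 * u) :=
  srw_visits_bessel_general m hm x1 x2 r hrpos
end

section
/- For x = (x1,x2) ∈ R^2 and λ > 0, the maximum of the linear functional y ↦ x·y over the level set {y ∈ R^2 : log((cosh y1 + cosh y2)/2) = λ} equals x1·arcsinh(s x1) + x2·arcsinh(s x2), where s > 0 is determined by sqrt(1+s^2 x1^2) + sqrt(1+s^2 x2^2) = 2 e^λ. -/
/-- Tangent line inequality for cosh. -/
lemma cosh_tangent (a y : ℝ) :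
    Real.cosh a + Real.sinh a * (y - a) ≤ Real.cosh y := by
  have h1 : (y - a) + 1 ≤ Real.exp (y - a) := Real.add_one_le_exp _
  have h2 : (a - y) + 1 ≤ Real.exp (a - y) := Real.add_one_le_exp _
  have e1 : Real.exp (y - a) * Real.exp a = Real.exp y := by
    rw [← Real.exp_add]; ring_nf
  have e2 : Real.exp (a - y) * Real.exp (-a) = Real.exp (-y) := by
    rw [← Real.exp_add]; ring_nf
  have pa : 0 < Real.exp a := Real.exp_pos a
  have pna : 0 < Real.exp (-a) := Real.exp_pos (-a)
  rw [Real.cosh_eq, Real.cosh_eq, Real.sinh_eq]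
  nlinarith [mul_le_mul_of_nonneg_right h1 pa.le, mul_le_mul_of_nonneg_right h2 pna.le]

/-- Constrained maximization over a level set of the log-Laplace transform
`Λ(y) = log((cosh y₁ + cosh y₂)/2)`: for `x ≠ 0`, `λ > 0`, the maximum of `x·y`
over `{Λ = λ}` equals `x₁ arsinh(s x₁) + x₂ arsinh(s x₂)`, where `s > 0` satisfies
`√(1+s²x₁²) + √(1+s²x₂²) = 2 e^λ`. -/
theorem max_on_level_set (x1 x2 : ℝ) (hx : ¬(x1 = 0 ∧ x2 = 0)) (lam s : ℝ)
    (hlam : 0 < lam) (hs : 0 < s)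
    (hconstraint :
      Real.sqrt (1 + s ^ 2 * x1 ^ 2) + Real.sqrt (1 + s ^ 2 * x2 ^ 2)
        = 2 * Real.exp lam) :
    IsGreatest
      {v : ℝ | ∃ y : ℝ × ℝ,
        Real.log ((Real.cosh y.1 + Real.cosh y.2) / 2) = lam ∧ v = x1 * y.1 + x2 * y.2}
      (x1 * Real.arsinh (s * x1) + x2 * Real.arsinh (s * x2)) := by
  set a1 := Real.arsinh (s * x1)
  set a2 := Real.arsinh (s * x2)
  have hc1 : Real.cosh a1 = Real.sqrt (1 + s ^ 2 * x1 ^ 2) := by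
    rw [Real.cosh_arsinh]; ring_nf
  have hc2 : Real.cosh a2 = Real.sqrt (1 + s ^ 2 * x2 ^ 2) := by
    rw [Real.cosh_arsinh]; ring_nf
  have hsum : Real.cosh a1 + Real.cosh a2 = 2 * Real.exp lam := by
    rw [hc1, hc2, hconstraint]
  constructor
  · refine ⟨(a1, a2), ?_, rfl⟩
    have : (Real.cosh a1 + Real.cosh a2) / 2 = Real.exp lam := by
      rw [hsum]; ring
    rw [this, Real.log_exp]
  · rintro v ⟨⟨y1, y2⟩, hy, rfl⟩
    simp only at hy
    have hpos : 0 < (Real.cosh y1 + Real.cosh y2) / 2 := by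
      nlinarith [Real.one_le_cosh y1, Real.one_le_cosh y2]
    have hsum' : Real.cosh y1 + Real.cosh y2 = 2 * Real.exp lam := by
      have := Real.exp_log hpos
      rw [hy] at this
      linarith
    have t1 := cosh_tangent a1 y1
    have t2 := cosh_tangent a2 y2
    rw [Real.sinh_arsinh] at t1 t2
    nlinarith [mul_pos hs hs]
end
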